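/- For all integers m and n, the family (Ã(m,k)·B(n,k))_{k∈ℤ} has only finitely many nonzero members, and 2·Σ_{k∈ℤ} Ã(m,k)·B(n,k) = δ_{m,n} in ℚ[β]. (Equivalently, the β-deformed fermions satisfy the duality relation [(Φ^{(β)}_m)^*, φ^{[β]}_n]_+ = δ_{m,n}.) -/

import Mathlib

/-!
Statement 1: duality `[(Φ^{(β)}_m)^*, φ^{[β]}_n]_+ = δ_{m,n}` expressed through
the coefficient families: `(Ã(m,k)·B(n,k))_k` has finite support and
`2·Σ_k Ã(m,k)·B(n,k) = δ_{m,n}` in `ℚ(β)`.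
-/

noncomputable section

open scoped BigOperators

/-- The base field `K = ℚ(β)`. -/
abbrev K : Type := RatFunc ℚ

/-- The indeterminate `β`. -/
def β : K := RatFunc.X

/-- The geometric-series expansion of `1/(1+cz)` as a formal power series. -/
def geomPS (c : K) : PowerSeries K := PowerSeries.mk fun n => (-c) ^ n

/-- `A(m,k) = [z^m](z+β/2)^k` for `k ≥ 0`, and
`A(m,k) = [z^m]((z⁻¹/(1+(β/2)z⁻¹))^{-k})` (a power series in `z⁻¹`) for `k < 0`. -/
def Acoef (m k : ℤ) : K :=
  if 0 ≤ k then
    (if 0 ≤ m then ((Polynomial.X + Polynomial.C (β / 2)) ^ k.toNat).coeff m.toNat else 0)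
  else
    (if m ≤ 0 then
      PowerSeries.coeff (-m).toNat ((PowerSeries.X * geomPS (β / 2)) ^ (-k).toNat) else 0)

/-- `B(n,k) = [z^n]((z/(1+(β/2)z))^k)` (a power series in `z`) for `k > 0`, and
`B(n,k) = [z^n]((z⁻¹+β/2)^{-k})` for `k ≤ 0`. -/
def Bcoef (n k : ℤ) : K :=
  if 0 < k then
    (if 0 ≤ n then
      PowerSeries.coeff n.toNat ((PowerSeries.X * geomPS (β / 2)) ^ k.toNat) else 0)
  else
    (if n ≤ 0 then ((Polynomial.X + Polynomial.C (β / 2)) ^ (-k).toNat).coeff (-n).toNat else 0)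


/-- `Ã(m,k) := (1/2)·Σ_{i≥0} (−β/2)^i·A(m+i,k)` (finitely many nonzero terms). -/
def Atil (m k : ℤ) : K := (1 / 2 : K) * ∑ᶠ i : ℕ, (-β / 2) ^ i * Acoef (m + i) k

section Helpers
open Finset

lemma hockey (P N : ℕ) : ∑ j ∈ range (N+1), (P+j).choose j = (P+N+1).choose N := by
  induction N with
  | zero => simp
  | succ N ih =>
      rw [sum_range_succ, ih, show P+(N+1) = P+N+1 from rfl, show P+N+1+1 = (P+N+1)+1 from rfl,
        Nat.choose_succ_succ (P+N+1) N]

lemma altpart (Kn r : ℕ) : ∑ i ∈ range (r+1), (-1:ℤ)^i * ((Kn+1).choose i) = (-1)^r * (Kn.choose r) := by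
  induction r with
  | zero => simp
  | succ r ih => rw [sum_range_succ, ih, Nat.choose_succ_succ' Kn r]; push_cast; ring

lemma negpow_sub (d j : ℕ) (hj : j ≤ d) : (-1:ℤ)^(d-j) = (-1)^d * (-1)^j := by
  have h2 : (-1:ℤ)^j * (-1)^j = 1 := by rw [← pow_add]; exact Even.neg_one_pow ⟨j, rfl⟩
  calc (-1:ℤ)^(d-j) = (-1)^(d-j) * ((-1)^j * (-1)^j) := by rw [h2, mul_one]
    _ = ((-1)^(d-j) * (-1)^j) * (-1)^j := by ring
    _ = (-1)^d * (-1)^j := by rw [← pow_add, Nat.sub_add_cancel hj]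

lemma tailsum (M d : ℕ) : ∑ j ∈ range (d+1), (-1:ℤ)^j * ((M+1+d).choose (M+1+j)) = (M+d).choose M := by
  rw [← Finset.sum_range_reflect]
  have h1 : ∀ j ∈ range (d+1), (-1:ℤ)^(d+1-1-j) * ((M+1+d).choose (M+1+(d+1-1-j)))
      = (-1)^d * ((-1)^j * ((M+d+1).choose j)) := by
    intro j hj
    have hj' : j ≤ d := by simpa [Nat.lt_succ_iff] using hj
    have e1 : d+1-1-j = d-j := by omega
    have e2 : M+1+(d-j) = (M+1+d)-j := by omega
    rw [e1, e2, Nat.choose_symm (by omega), negpow_sub d j hj']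
    rw [show M+1+d = M+d+1 from by omega]
    ring
  rw [Finset.sum_congr rfl h1, ← Finset.mul_sum, altpart (M+d) d, ← mul_assoc,
    ← pow_add, Even.neg_one_pow ⟨d, rfl⟩, one_mul]
  rw [show (M+d).choose d = (M+d).choose M from by rw [← Nat.choose_symm (by omega : M ≤ M+d)]; congr 1; omega]

lemma altrev (D : ℕ) : ∑ j ∈ range (D+1), (-1:ℤ)^(D-j) * (D.choose j) = if D = 0 then 1 else 0 := by
  rw [← Finset.sum_range_reflect, ← Int.alternating_sum_range_choose (n := D)]
  apply Finset.sum_congr rfl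
  intro j hj
  have hj' : j ≤ D := by simpa [Nat.lt_succ_iff] using hj
  rw [show D+1-1-j = D-j from by omega, show D-(D-j) = j from by omega, Nat.choose_symm hj']

lemma altrev2 (D : ℕ) : ∑ j ∈ range (D+1), (-1:ℤ)^j * (D.choose (D-j)) = if D = 0 then 1 else 0 := by
  rw [← Finset.sum_range_reflect, ← altrev D]
  apply Finset.sum_congr rfl
  intro j hj
  have hj' : j ≤ D := by simpa [Nat.lt_succ_iff] using hj
  rw [show D+1-1-j = D-j from by omega, show D-(D-j) = j from by omega]

lemma ident1 (M D : ℕ) : ∑ j ∈ range (D+1),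
    (-1:ℤ)^(D-j) * ((M+j).choose M) * ((M+D).choose (D-j)) = if D = 0 then 1 else 0 := by
  have key : ∀ j ∈ range (D+1), (-1:ℤ)^(D-j) * ((M+j).choose M) * ((M+D).choose (D-j))
      = ((M+D).choose M : ℤ) * ((-1)^(D-j) * (D.choose j)) := by
    intro j hj
    have hj' : j ≤ D := by simpa [Nat.lt_succ_iff] using hj
    have hsym : (M+D).choose (D-j) = (M+D).choose (M+j) := by
      rw [← Nat.choose_symm (show M+j ≤ M+D by omega)]; congr 1; omega
    have hch := Nat.choose_mul (n := M+D) (show M ≤ M+j by omega)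
    rw [show (M+D)-M = D from by omega, show (M+j)-M = j from by omega] at hch
    have hc : ((M+D).choose (M+j) : ℤ) * ((M+j).choose M) = ((M+D).choose M) * (D.choose j) :=
      mod_cast congrArg (Nat.cast : ℕ → ℤ) hch
    calc (-1:ℤ)^(D-j) * ((M+j).choose M) * ((M+D).choose (D-j))
        = (-1:ℤ)^(D-j) * (((M+D).choose (D-j) : ℤ) * ((M+j).choose M)) := by rw [hsym]; ring
      _ = (-1:ℤ)^(D-j) * (((M+D).choose M : ℤ) * (D.choose j)) := by rw [hsym, hc]
      _ = ((M+D).choose M : ℤ) * ((-1)^(D-j) * (D.choose j)) := by ring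
  rw [Finset.sum_congr rfl key, ← Finset.mul_sum, altrev D]
  split_ifs with h
  · subst h; simp
  · rw [mul_zero]

lemma ident2 (a D : ℕ) : ∑ j ∈ range (D+1),
    (-1:ℤ)^j * ((a+D).choose j) * ((a+D-j).choose a) = if D = 0 then 1 else 0 := by
  have key : ∀ j ∈ range (D+1), (-1:ℤ)^j * ((a+D).choose j) * ((a+D-j).choose a)
      = ((a+D).choose a : ℤ) * ((-1)^j * (D.choose (D-j))) := by
    intro j hj
    have hj' : j ≤ D := by simpa [Nat.lt_succ_iff] using hj
    have hsym : (a+D).choose j = (a+D).choose (a+D-j) := by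
      rw [← Nat.choose_symm (show j ≤ a+D by omega)]
    have hch := Nat.choose_mul (n := a+D) (show a ≤ a+D-j by omega)
    rw [show (a+D)-a = D from by omega, show (a+D-j)-a = D-j from by omega] at hch
    have hc : ((a+D).choose (a+D-j) : ℤ) * ((a+D-j).choose a) = ((a+D).choose a) * (D.choose (D-j)) :=
      mod_cast congrArg (Nat.cast : ℕ → ℤ) hch
    calc (-1:ℤ)^j * ((a+D).choose j) * ((a+D-j).choose a)
        = (-1:ℤ)^j * (((a+D).choose (a+D-j) : ℤ) * ((a+D-j).choose a)) := by rw [← hsym]; ring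
      _ = (-1:ℤ)^j * (((a+D).choose a : ℤ) * (D.choose (D-j))) := by rw [hc]
      _ = ((a+D).choose a : ℤ) * ((-1)^j * (D.choose (D-j))) := by ring
  rw [Finset.sum_congr rfl key, ← Finset.mul_sum, altrev2 D]
  split_ifs with h
  · subst h; simp
  · rw [mul_zero]

lemma coeff_geomPS (c : K) (n : ℕ) : PowerSeries.coeff n (geomPS c) = (-c)^n := by
  simp [geomPS]

lemma geom_pow_coeff (c : K) (P : ℕ) : ∀ j : ℕ,
    PowerSeries.coeff j (geomPS c ^ (P+1)) = (-c)^j * ((P+j).choose j : K) := by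
  induction P with
  | zero => intro j; simp [coeff_geomPS]
  | succ P ih =>
      intro j
      rw [pow_succ, PowerSeries.coeff_mul, Finset.Nat.sum_antidiagonal_eq_sum_range_succ_mk]
      have key : ∀ k ∈ range (j+1), PowerSeries.coeff k (geomPS c ^ (P+1)) *
          PowerSeries.coeff (j-k) (geomPS c) = (-c)^j * ((P+k).choose k : K) := by
        intro k hk
        have hk' : k ≤ j := by simpa [Nat.lt_succ_iff] using hk
        rw [ih k, coeff_geomPS]
        rw [show (-c)^k * ((P+k).choose k : K) * (-c)^(j-k)
            = (-c)^k * (-c)^(j-k) * ((P+k).choose k : K) from by ring,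
          ← pow_add, Nat.add_sub_cancel' hk']
      rw [Finset.sum_congr rfl key, ← Finset.mul_sum]
      congr 1
      have := hockey P j
      have : ((∑ k ∈ range (j+1), (P+k).choose k : ℕ) : K) = (((P+j+1).choose j : ℕ) : K) := by
        exact_mod_cast congrArg (Nat.cast : ℕ → K) this
      rw [Nat.cast_sum] at this
      rw [this, show P+1+j = P+j+1 from by omega]

lemma Xgeom_coeff_eq (c : K) (P d : ℕ) :
    PowerSeries.coeff (P+1+d) ((PowerSeries.X * geomPS c)^(P+1)) = (-c)^d * ((P+d).choose d : K) := by
  rw [mul_pow, PowerSeries.coeff_X_pow_mul', if_pos (by omega : P+1 ≤ P+1+d),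
    show P+1+d-(P+1) = d from by omega, geom_pow_coeff]

lemma Xgeom_coeff_zero (c : K) (P N : ℕ) (h : N < P+1) :
    PowerSeries.coeff N ((PowerSeries.X * geomPS c)^(P+1)) = 0 := by
  rw [mul_pow, PowerSeries.coeff_X_pow_mul', if_neg (by omega)]

lemma Acoef_nat (j Kk : ℕ) : Acoef j Kk = (β/2)^(Kk-j) * (Kk.choose j : K) := by
  unfold Acoef
  rw [if_pos (by positivity), if_pos (by positivity), Int.toNat_natCast, Int.toNat_natCast,
    Polynomial.coeff_X_add_C_pow]

lemma Acoef_neg_m (m k : ℤ) (hm : m < 0) (hk : 0 ≤ k) : Acoef m k = 0 := by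
  unfold Acoef; rw [if_pos hk, if_neg (by omega)]

lemma Acoef_negk (A d : ℕ) : Acoef (-((A:ℤ)+1+d)) (-((A:ℤ)+1)) = (-(β/2))^d * ((A+d).choose d : K) := by
  unfold Acoef
  rw [if_neg (by omega), if_pos (by omega),
    show (-(-((A:ℤ)+1+d))).toNat = A+1+d from by omega,
    show (-(-((A:ℤ)+1))).toNat = A+1 from by omega, Xgeom_coeff_eq]

lemma Acoef_negk_zero (m k : ℤ) (hk : k < 0) (hm : k < m) : Acoef m k = 0 := by
  unfold Acoef
  rw [if_neg (by omega)]
  by_cases h : m ≤ 0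
  · rw [if_pos h]
    obtain ⟨P, hP⟩ : ∃ P, (-k).toNat = P+1 := ⟨(-k).toNat - 1, by omega⟩
    rw [hP]
    exact Xgeom_coeff_zero _ P _ (by omega)
  · rw [if_neg h]

-- ### Bcoef values

lemma Bcoef_pos (P d : ℕ) : Bcoef ((P:ℤ)+1+d) ((P:ℤ)+1) = (-(β/2))^d * ((P+d).choose d : K) := by
  unfold Bcoef
  rw [if_pos (by omega), if_pos (by omega),
    show ((P:ℤ)+1+d).toNat = P+1+d from by omega,
    show ((P:ℤ)+1).toNat = P+1 from by omega, Xgeom_coeff_eq]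

lemma Bcoef_zero_gt (n k : ℤ) (h : n < k) : Bcoef n k = 0 := by
  unfold Bcoef
  rcases lt_or_ge 0 k with hk | hk
  · rw [if_pos hk]
    by_cases hn : 0 ≤ n
    · rw [if_pos hn]
      obtain ⟨P, hP⟩ : ∃ P, k.toNat = P+1 := ⟨k.toNat - 1, by omega⟩
      rw [hP]
      exact Xgeom_coeff_zero _ P _ (by omega)
    · rw [if_neg hn]
  · rw [if_neg (by omega), if_pos (by omega), Polynomial.coeff_X_add_C_pow,
      Nat.choose_eq_zero_of_lt (by omega), Nat.cast_zero, mul_zero]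

lemma Bcoef_zero_npos (n k : ℤ) (hk : k ≤ 0) (hn : 0 < n) : Bcoef n k = 0 := by
  unfold Bcoef; rw [if_neg (by omega), if_neg (by omega)]

lemma Bcoef_neg (a e : ℕ) : Bcoef (-(a:ℤ)) (-(a:ℤ)-e) = (β/2)^e * ((a+e).choose a : K) := by
  unfold Bcoef
  rw [if_neg (by omega), if_pos (by omega),
    show (-(-(a:ℤ)-e)).toNat = a+e from by omega,
    show (-(-(a:ℤ))).toNat = a from by omega, Polynomial.coeff_X_add_C_pow,
    show a+e-a = e from by omega]

lemma Atil_eq_sum (m k : ℤ) (off R : ℕ)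
    (h0 : ∀ i : ℕ, i < off → Acoef (m+i) k = 0)
    (h1 : ∀ i : ℕ, off + R ≤ i → Acoef (m+i) k = 0) :
    Atil m k = (1/2 : K) * ∑ j ∈ range R, (-β/2)^(off+j) * Acoef (m+off+j) k := by
  unfold Atil
  congr 1
  rw [finsum_eq_sum_of_support_subset _ (s := range (off+R)) ?hs]
  case hs =>
    intro i hi
    simp only [Function.mem_support] at hi
    simp only [Finset.coe_range, Set.mem_Iio]
    by_contra h
    exact hi (by rw [h1 i (by omega), mul_zero])
  rw [range_eq_Ico, ← Finset.sum_Ico_consecutive _ (Nat.zero_le off) (Nat.le_add_right off R)]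
  have hz : ∑ i ∈ Finset.Ico 0 off, (-β/2)^i * Acoef (m+i) k = 0 :=
    Finset.sum_eq_zero fun i hi => by
      rw [h0 i (Finset.mem_Ico.mp hi).2, mul_zero]
  rw [hz, zero_add, Finset.sum_Ico_eq_sum_range, show off+R-off = R from by omega]
  apply Finset.sum_congr rfl
  intro j hj
  push_cast
  ring_nf

-- m ≤ 0, k ≥ 1 : Atil = 0

lemma Atil_zero_npos (m k : ℤ) (hm : m ≤ 0) (hk : 1 ≤ k) : Atil m k = 0 := by
  obtain ⟨M, rfl⟩ : ∃ M : ℕ, m = -(M:ℤ) := ⟨(-m).toNat, by omega⟩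
  obtain ⟨P, rfl⟩ : ∃ P : ℕ, k = (P:ℤ)+1 := ⟨(k-1).toNat, by omega⟩
  rw [Atil_eq_sum _ _ M (P+2)
    (fun i hi => Acoef_neg_m _ _ (by omega) (by omega))
    (fun i hi => by
      rw [show (-(M:ℤ)+i) = ((i-M : ℕ) : ℤ) from by push_cast; omega,
        show ((P:ℤ)+1) = ((P+1 : ℕ) : ℤ) from by push_cast; ring, Acoef_nat,
        Nat.choose_eq_zero_of_lt (by omega), Nat.cast_zero, mul_zero])]
  have key : ∀ j ∈ range (P+2), (-β/2)^(M+j) * Acoef (-(M:ℤ)+M+j) ((P:ℤ)+1)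
      = ((-1)^M * (β/2)^(M+P+1)) * ((-1:K)^j * ((P+1).choose j : K)) := by
    intro j hj
    have hj' : j ≤ P+1 := by simpa [Nat.lt_succ_iff] using hj
    rw [show (-(M:ℤ)+M+j) = ((j:ℕ) : ℤ) from by push_cast; ring,
      show ((P:ℤ)+1) = ((P+1 : ℕ) : ℤ) from by push_cast; ring, Acoef_nat]
    rw [show (-β/2 : K) = -(β/2) from by ring, neg_pow]
    rw [show (-1:K)^(M+j) * (β/2)^(M+j) * ((β/2)^(P+1-j) * ((P+1).choose j : K))
        = ((-1)^(M+j)) * ((β/2)^(M+j) * (β/2)^(P+1-j)) * (((P+1).choose j : K)) from by ring,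
      ← pow_add, show M+j+(P+1-j) = M+P+1 from by omega, pow_add (-1:K) M j]
    ring
  rw [Finset.sum_congr rfl key, ← Finset.mul_sum]
  have hz : ∑ j ∈ range (P+2), ((-1:K)^j * ((P+1).choose j : K)) = 0 := by
    have h := Int.alternating_sum_range_choose (n := P+1)
    rw [if_neg (by omega)] at h
    have h2 : ((∑ j ∈ range (P+1+1), ((-1)^j * ((P+1).choose j) : ℤ)) : K) = ((0:ℤ) : K) :=
      by exact_mod_cast congrArg (Int.cast : ℤ → K) h
    push_cast at h2
    convert h2 using 1
  rw [hz, mul_zero, mul_zero]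

-- k < m : Atil = 0

lemma Atil_zero_of_lt (m k : ℤ) (h : k < m) : Atil m k = 0 := by
  have hz : ∀ i : ℕ, Acoef (m+i) k = 0 := by
    intro i
    rcases le_or_gt 0 k with hk | hk
    · rcases le_or_gt 0 (m+i) with hmi | hmi
      · rw [show (m+i : ℤ) = (((m+i).toNat : ℕ) : ℤ) from by omega,
          show k = ((k.toNat : ℕ) : ℤ) from by omega, Acoef_nat,
          Nat.choose_eq_zero_of_lt (by omega), Nat.cast_zero, mul_zero]
      · exact Acoef_neg_m _ _ (by omega) hk
    · exact Acoef_negk_zero _ _ hk (by omega)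
  rw [Atil_eq_sum _ _ 0 0 (fun i hi => by omega) (fun i _ => hz i)]
  simp

-- 1 ≤ m ≤ k

lemma Atil_pos (M d : ℕ) : Atil ((M:ℤ)+1) ((M:ℤ)+1+d) = (1/2 : K) * (β/2)^d * ((M+d).choose M : K) := by
  rw [Atil_eq_sum _ _ 0 (d+1)
    (fun i hi => by omega)
    (fun i hi => by
      rw [show ((M:ℤ)+1+i) = ((M+1+i : ℕ) : ℤ) from by push_cast; ring,
        show ((M:ℤ)+1+d) = ((M+1+d : ℕ) : ℤ) from by push_cast; ring, Acoef_nat,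
        Nat.choose_eq_zero_of_lt (by omega), Nat.cast_zero, mul_zero])]
  simp only [Nat.cast_zero, add_zero, zero_add]
  have key : ∀ j ∈ range (d+1), (-β/2)^j * Acoef ((M:ℤ)+1+j) ((M:ℤ)+1+d)
      = (β/2)^d * ((-1:K)^j * (((M+1+d).choose (M+1+j) : ℕ) : K)) := by
    intro j hj
    have hj' : j ≤ d := by simpa [Nat.lt_succ_iff] using hj
    rw [show ((M:ℤ)+1+j) = ((M+1+j : ℕ) : ℤ) from by push_cast; ring,
      show ((M:ℤ)+1+d) = ((M+1+d : ℕ) : ℤ) from by push_cast; ring, Acoef_nat,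
      show M+1+d-(M+1+j) = d-j from by omega]
    rw [show (-β/2 : K) = -(β/2) from by ring, neg_pow]
    rw [show (-1:K)^j * (β/2)^j * ((β/2)^(d-j) * (((M+1+d).choose (M+1+j) : ℕ) : K))
        = ((β/2)^j * (β/2)^(d-j)) * ((-1:K)^j * (((M+1+d).choose (M+1+j) : ℕ) : K)) from by ring,
      ← pow_add, show j+(d-j) = d from by omega]
  rw [Finset.sum_congr rfl key, ← Finset.mul_sum]
  have hz : ∑ j ∈ range (d+1), ((-1:K)^j * (((M+1+d).choose (M+1+j) : ℕ) : K))
      = (((M+d).choose M : ℕ) : K) := by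
    have h := tailsum M d
    have h2 : ((∑ j ∈ range (d+1), ((-1)^j * ((M+1+d).choose (M+1+j)) : ℤ)) : K)
        = (((M+d).choose M : ℕ) : K) := by exact_mod_cast congrArg (Int.cast : ℤ → K) h
    push_cast at h2 ⊢
    convert h2 using 1
  rw [hz]; ring

-- m ≤ k ≤ 0

lemma Atil_negk' (a d : ℕ) :
    Atil (-((a:ℤ)+d)) (-(a:ℤ)) = (1/2 : K) * (-(β/2))^d * ((a+d).choose d : K) := by
  rcases a with _ | A
  · -- a = 0, k = 0
    rw [show (-(((0:ℕ):ℤ))) = (0:ℤ) from by norm_num]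
    rw [Atil_eq_sum _ _ d 1
      (fun i hi => Acoef_neg_m _ _ (by push_cast; omega) (by omega))
      (fun i hi => by
        rw [show (-(((0:ℕ):ℤ)+d)+i) = ((i-d : ℕ) : ℤ) from by push_cast; omega,
          show (0:ℤ) = ((0 : ℕ) : ℤ) from rfl, Acoef_nat,
          Nat.choose_eq_zero_of_lt (by omega), Nat.cast_zero, mul_zero])]
    rw [Finset.sum_range_one,
      show (-(((0:ℕ):ℤ)+d)+d+(0:ℕ)) = ((0 : ℕ) : ℤ) from by push_cast; ring,
      show (0:ℤ) = ((0 : ℕ) : ℤ) from rfl, Acoef_nat]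
    simp [show (-β/2 : K) = -(β/2) from by ring]
  · -- a = A+1
    rw [Atil_eq_sum _ _ 0 (d+1)
      (fun i hi => by omega)
      (fun i hi => Acoef_negk_zero _ _ (by push_cast; omega) (by push_cast; omega))]
    simp only [Nat.cast_zero, add_zero, zero_add]
    have key : ∀ j ∈ range (d+1), (-β/2)^j * Acoef (-(((A+1:ℕ):ℤ)+d)+j) (-((A+1:ℕ):ℤ))
        = (-(β/2))^d * (((A+(d-j)).choose (d-j) : ℕ) : K) := by
      intro j hj
      have hj' : j ≤ d := by simpa [Nat.lt_succ_iff] using hj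
      rw [show (-(((A+1:ℕ):ℤ)+d)+j) = -((A:ℤ)+1+((d-j : ℕ) : ℤ)) from by push_cast; omega,
        show (-((A+1:ℕ):ℤ)) = -((A:ℤ)+1) from by push_cast; ring, Acoef_negk]
      rw [show (-β/2 : K) = -(β/2) from by ring,
        show (-(β/2):K)^j * ((-(β/2))^(d-j) * (((A+(d-j)).choose (d-j) : ℕ) : K))
          = ((-(β/2):K)^j * (-(β/2))^(d-j)) * (((A+(d-j)).choose (d-j) : ℕ) : K) from by ring,
        ← pow_add, show j+(d-j) = d from by omega]
    rw [Finset.sum_congr rfl key, ← Finset.mul_sum]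
    have hz : ∑ j ∈ range (d+1), (((A+(d-j)).choose (d-j) : ℕ) : K)
        = (((A+1+d).choose d : ℕ) : K) := by
      have hr := Finset.sum_range_reflect (fun j => (((A+j).choose j : ℕ) : K)) (d+1)
      have he : ∀ j ∈ range (d+1), (((A+(d+1-1-j)).choose (d+1-1-j) : ℕ) : K)
          = (((A+(d-j)).choose (d-j) : ℕ) : K) := by
        intro j hj
        rw [show d+1-1-j = d-j from by omega]
      rw [Finset.sum_congr rfl he] at hr
      rw [hr]
      have h2 : ((∑ j ∈ range (d+1), ((A+j).choose j) : ℕ) : K) = (((A+d+1).choose d : ℕ) : K) := by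
        exact_mod_cast congrArg (Nat.cast : ℕ → K) (hockey A d)
      push_cast at h2 ⊢
      rw [h2, show A+d+1 = A+1+d from by omega]
    rw [hz]
    ring

lemma two_ne_zero_K : (2:K) ≠ 0 := by
  intro h2
  exact two_ne_zero ((algebraMap ℚ K).injective (by simpa using h2))

end Helpers

open Finset

theorem duality_PhiBeta_star_phiBracket (m n : ℤ) :
    (Function.support fun k : ℤ => Atil m k * Bcoef n k).Finite ∧
    2 * ∑ᶠ k : ℤ, Atil m k * Bcoef n k = (if m = n then 1 else 0) := by
  rcases lt_or_ge 0 n with hn | hn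
  · rcases le_or_gt m 0 with hm | hm
    · -- m ≤ 0 < n : everything vanishes
      have hz : ∀ k : ℤ, Atil m k * Bcoef n k = 0 := by
        intro k
        rcases le_or_gt k 0 with h | h
        · rw [Bcoef_zero_npos n k h hn, mul_zero]
        · rw [Atil_zero_npos m k hm h, zero_mul]
      refine ⟨Set.Finite.subset (Set.finite_empty) fun k hk => (hk (hz k)).elim, ?_⟩
      rw [finsum_eq_zero_of_forall_eq_zero hz, if_neg (by omega), mul_zero]
    · rcases lt_or_ge n m with hmn | hmn
      · -- 0 < n < m
        have hz : ∀ k : ℤ, Atil m k * Bcoef n k = 0 := by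
          intro k
          rcases le_or_gt k n with h | h
          · rw [Atil_zero_of_lt m k (by omega), zero_mul]
          · rw [Bcoef_zero_gt n k h, mul_zero]
        refine ⟨Set.Finite.subset (Set.finite_empty) fun k hk => (hk (hz k)).elim, ?_⟩
        rw [finsum_eq_zero_of_forall_eq_zero hz, if_neg (by omega), mul_zero]
      · -- 1 ≤ m ≤ n
        obtain ⟨M, rfl⟩ : ∃ M : ℕ, m = (M:ℤ)+1 := ⟨(m-1).toNat, by omega⟩
        obtain ⟨D, rfl⟩ : ∃ D : ℕ, n = (M:ℤ)+1+D := ⟨(n-(M+1)).toNat, by omega⟩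
        set emb : ℕ ↪ ℤ := ⟨fun j => (M:ℤ)+1+j, show Function.Injective (fun j : ℕ => (M:ℤ)+1+j) from fun u v h => by simpa using h⟩ with hemb
        have hsub : (Function.support fun k : ℤ => Atil ((M:ℤ)+1) k * Bcoef ((M:ℤ)+1+D) k)
            ⊆ ((range (D+1)).map emb : Finset ℤ) := by
          intro k hk
          simp only [Function.mem_support] at hk
          simp only [Finset.coe_map, Finset.coe_range, Set.mem_image, Set.mem_Iio, hemb,
            Function.Embedding.coeFn_mk]
          rcases lt_or_ge k ((M:ℤ)+1) with hlt | hge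
          · exact (hk (by rw [Atil_zero_of_lt _ _ hlt, zero_mul])).elim
          rcases lt_or_ge ((M:ℤ)+1+D) k with hgt | hle
          · exact (hk (by rw [Bcoef_zero_gt _ _ hgt, mul_zero])).elim
          · exact ⟨(k-(M+1)).toNat, by omega, by omega⟩
        refine ⟨Set.Finite.subset (Finset.finite_toSet _) hsub, ?_⟩
        rw [finsum_eq_sum_of_support_subset _ hsub, Finset.sum_map]
        simp only [hemb, Function.Embedding.coeFn_mk]
        have key : ∀ j ∈ range (D+1),
            Atil ((M:ℤ)+1) ((M:ℤ)+1+j) * Bcoef ((M:ℤ)+1+D) ((M:ℤ)+1+j)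
            = ((1/2 : K) * (β/2)^D) *
              ((-1:K)^(D-j) * (((M+j).choose M : ℕ) : K) * (((M+D).choose (D-j) : ℕ) : K)) := by
          intro j hj
          have hj' : j ≤ D := by simpa [Nat.lt_succ_iff] using hj
          have hA := Atil_pos M j
          have hB := Bcoef_pos (M+j) (D-j)
          have e4 : ((M+j:ℕ):ℤ)+1+((D-j:ℕ):ℤ) = (M:ℤ)+1+D := by push_cast; omega
          have e5 : ((M+j:ℕ):ℤ)+1 = (M:ℤ)+1+(j:ℤ) := by push_cast; ring
          rw [e4, e5] at hB
          rw [hA, hB, neg_pow, show (M+j)+(D-j) = M+D from by omega]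
          rw [show (1/2 : K) * (β/2)^j * (((M+j).choose M : ℕ) : K) *
              ((-1:K)^(D-j) * (β/2)^(D-j) * (((M+D).choose (D-j) : ℕ) : K))
              = ((1/2 : K) * ((β/2)^j * (β/2)^(D-j))) *
              ((-1:K)^(D-j) * (((M+j).choose M : ℕ) : K) * (((M+D).choose (D-j) : ℕ) : K)) from
            by ring, ← pow_add, show j+(D-j) = D from by omega]
        rw [Finset.sum_congr rfl key, ← Finset.mul_sum]
        have hz : ∑ j ∈ range (D+1),
            ((-1:K)^(D-j) * (((M+j).choose M : ℕ) : K) * (((M+D).choose (D-j) : ℕ) : K))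
            = if D = 0 then 1 else 0 := by
          rcases eq_or_ne D 0 with h | h
          · subst h; simp
          · rw [if_neg h]
            have h0 := ident1 M D
            rw [if_neg h] at h0
            have h2 : ((∑ j ∈ range (D+1),
                ((-1)^(D-j) * ((M+j).choose M) * ((M+D).choose (D-j)) : ℤ)) : K) = ((0:ℤ) : K) :=
              by exact_mod_cast congrArg (Int.cast : ℤ → K) h0
            push_cast at h2
            convert h2 using 1
        rw [hz]
        rcases eq_or_ne D 0 with h | h
        · subst h; norm_num
        · rw [if_neg h, if_neg (by omega), mul_zero, mul_zero]
  · rcases lt_or_ge n m with hmn | hmn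
    · -- n ≤ 0, n < m
      have hz : ∀ k : ℤ, Atil m k * Bcoef n k = 0 := by
        intro k
        rcases le_or_gt k n with h | h
        · rw [Atil_zero_of_lt m k (by omega), zero_mul]
        · rw [Bcoef_zero_gt n k h, mul_zero]
      refine ⟨Set.Finite.subset (Set.finite_empty) fun k hk => (hk (hz k)).elim, ?_⟩
      rw [finsum_eq_zero_of_forall_eq_zero hz, if_neg (by omega), mul_zero]
    · -- m ≤ n ≤ 0
      obtain ⟨a, rfl⟩ : ∃ a : ℕ, n = -(a:ℤ) := ⟨(-n).toNat, by omega⟩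
      obtain ⟨D, rfl⟩ : ∃ D : ℕ, m = -(a:ℤ)-D := ⟨(-a-m).toNat, by omega⟩
      set emb : ℕ ↪ ℤ := ⟨fun j => -(a:ℤ)-D+j, show Function.Injective (fun j : ℕ => -(a:ℤ)-D+j) from fun u v h => by simpa using h⟩ with hemb
      have hsub : (Function.support fun k : ℤ => Atil (-(a:ℤ)-D) k * Bcoef (-(a:ℤ)) k)
          ⊆ ((range (D+1)).map emb : Finset ℤ) := by
        intro k hk
        simp only [Function.mem_support] at hk
        simp only [Finset.coe_map, Finset.coe_range, Set.mem_image, Set.mem_Iio, hemb,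
          Function.Embedding.coeFn_mk]
        rcases lt_or_ge k (-(a:ℤ)-D) with hlt | hge
        · exact (hk (by rw [Atil_zero_of_lt _ _ hlt, zero_mul])).elim
        rcases lt_or_ge (-(a:ℤ)) k with hgt | hle
        · exact (hk (by rw [Bcoef_zero_gt _ _ hgt, mul_zero])).elim
        · exact ⟨(k+a+D).toNat, by omega, by omega⟩
      refine ⟨Set.Finite.subset (Finset.finite_toSet _) hsub, ?_⟩
      rw [finsum_eq_sum_of_support_subset _ hsub, Finset.sum_map]
      simp only [hemb, Function.Embedding.coeFn_mk]
      have key : ∀ j ∈ range (D+1),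
          Atil (-(a:ℤ)-D) (-(a:ℤ)-D+j) * Bcoef (-(a:ℤ)) (-(a:ℤ)-D+j)
          = ((1/2 : K) * (β/2)^D) *
            ((-1:K)^j * (((a+D).choose j : ℕ) : K) * (((a+D-j).choose a : ℕ) : K)) := by
        intro j hj
        have hj' : j ≤ D := by simpa [Nat.lt_succ_iff] using hj
        have hA := Atil_negk' (a+(D-j)) j
        have e1 : -(((a+(D-j):ℕ):ℤ)+(j:ℤ)) = -(a:ℤ)-D := by push_cast; omega
        have e2 : -((a+(D-j):ℕ):ℤ) = -(a:ℤ)-D+j := by push_cast; omega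
        rw [e1, e2] at hA
        have hB := Bcoef_neg a (D-j)
        have e3 : -(a:ℤ)-((D-j:ℕ):ℤ) = -(a:ℤ)-D+j := by push_cast; omega
        rw [e3] at hB
        rw [hA, hB, neg_pow, show (a+(D-j))+j = a+D from by omega,
          show a+(D-j) = a+D-j from by omega]
        rw [show (1/2 : K) * ((-1:K)^j * (β/2)^j) * (((a+D).choose j : ℕ) : K) *
            ((β/2)^(D-j) * (((a+D-j).choose a : ℕ) : K))
            = ((1/2 : K) * ((β/2)^j * (β/2)^(D-j))) *
            ((-1:K)^j * (((a+D).choose j : ℕ) : K) * (((a+D-j).choose a : ℕ) : K)) from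
          by ring, ← pow_add, show j+(D-j) = D from by omega]
      rw [Finset.sum_congr rfl key, ← Finset.mul_sum]
      have hz : ∑ j ∈ range (D+1),
          ((-1:K)^j * (((a+D).choose j : ℕ) : K) * (((a+D-j).choose a : ℕ) : K))
          = if D = 0 then 1 else 0 := by
        rcases eq_or_ne D 0 with h | h
        · subst h; simp
        · rw [if_neg h]
          have h0 := ident2 a D
          rw [if_neg h] at h0
          have h2 : ((∑ j ∈ range (D+1),
              ((-1)^j * ((a+D).choose j) * ((a+D-j).choose a) : ℤ)) : K) = ((0:ℤ) : K) :=
            by exact_mod_cast congrArg (Int.cast : ℤ → K) h0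
          push_cast at h2
          convert h2 using 1
      rw [hz]
      rcases eq_or_ne D 0 with h | h
      · subst h; norm_num
      · rw [if_neg h, if_neg (by omega), mul_zero, mul_zero]

end
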